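/- Let X₁, X₂ ∈ ℝ^{p×q}. Then the minimum over all orthogonal matrices Γ ∈ O(q) of ‖X₂ − X₁Γ‖_F² equals ‖X₁‖_F² + ‖X₂‖_F² − 2(σ₁ + ⋯ + σ_q), where σ₁ ≥ ⋯ ≥ σ_q are the singular values of X₁ᵀX₂, and the minimum is attained at Γ = UVᵀ for any singular value decomposition X₁ᵀX₂ = UΣVᵀ. -/
import Mathlib


open Matrix Finset

/-- Squared Frobenius norm of a real matrix. -/
noncomputable def frobSq {p q : ℕ} (A : Matrix (Fin p) (Fin q) ℝ) : ℝ :=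
  ∑ i, ∑ j, (A i j) ^ 2

lemma frobSq_eq_trace {p q : ℕ} (A : Matrix (Fin p) (Fin q) ℝ) :
    frobSq A = (Aᵀ * A).trace := by
  unfold frobSq
  rw [Matrix.trace, Finset.sum_comm]
  simp [Matrix.mul_apply, Matrix.diag, pow_two]

lemma expand_frob {p q : ℕ} (X₁ X₂ : Matrix (Fin p) (Fin q) ℝ)
    (Γ : Matrix (Fin q) (Fin q) ℝ) (hΓ : Γᵀ * Γ = 1) :
    frobSq (X₂ - X₁ * Γ) =
      frobSq X₁ + frobSq X₂ - 2 * (Γᵀ * (X₁ᵀ * X₂)).trace := by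
  have hΓ' : Γ * Γᵀ = 1 := mul_eq_one_comm.mp hΓ
  rw [frobSq_eq_trace, frobSq_eq_trace, frobSq_eq_trace]
  rw [transpose_sub, transpose_mul, Matrix.sub_mul, Matrix.mul_sub, Matrix.mul_sub,
    Matrix.trace_sub, Matrix.trace_sub, Matrix.trace_sub]
  have h1 : (X₂ᵀ * (X₁ * Γ)).trace = (Γᵀ * (X₁ᵀ * X₂)).trace := by
    rw [← Matrix.trace_transpose (X₂ᵀ * (X₁ * Γ))]
    congr 1
    simp [Matrix.transpose_mul, Matrix.mul_assoc]
  have h2 : (Γᵀ * X₁ᵀ * (X₁ * Γ)).trace = (X₁ᵀ * X₁).trace := by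
    rw [Matrix.trace_mul_comm]
    have : X₁ * Γ * (Γᵀ * X₁ᵀ) = X₁ * X₁ᵀ := by
      rw [Matrix.mul_assoc X₁ Γ, ← Matrix.mul_assoc Γ, hΓ', Matrix.one_mul]
    rw [this, Matrix.trace_mul_comm]
  rw [h1, h2, Matrix.mul_assoc Γᵀ X₁ᵀ X₂]
  ring

lemma trace_form {q : ℕ} (Z : Matrix (Fin q) (Fin q) ℝ) (σ : Fin q → ℝ) :
    (Z * Matrix.diagonal σ).trace = ∑ i, Z i i * σ i := by
  simp [Matrix.trace, Matrix.diag, Matrix.mul_diagonal]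

lemma diag_le_one {q : ℕ} (Z : Matrix (Fin q) (Fin q) ℝ)
    (hZ : Z * Zᵀ = 1) (i : Fin q) : Z i i ≤ 1 := by
  have h : ∑ j, Z i j * Z i j = 1 := by
    have := congrFun (congrFun hZ i) i
    simpa [Matrix.mul_apply, Matrix.one_apply] using this
  have h2 : Z i i * Z i i ≤ 1 := by
    rw [← h]
    exact Finset.single_le_sum (fun j _ => mul_self_nonneg (Z i j)) (Finset.mem_univ i)
  nlinarith

/-- **Orthogonal Procrustes problem.** For `X₁, X₂ ∈ ℝ^{p×q}` and any SVD
`X₁ᵀX₂ = U (diagonal σ) Vᵀ` with `σ₁ ≥ ⋯ ≥ σ_q ≥ 0`, the minimum over `Γ ∈ O(q)` of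
`‖X₂ − X₁Γ‖_F²` equals `‖X₁‖_F² + ‖X₂‖_F² − 2(σ₁ + ⋯ + σ_q)` and is attained at
`Γ = UVᵀ`. -/
theorem stmt_6 {p q : ℕ} (X₁ X₂ : Matrix (Fin p) (Fin q) ℝ)
    (U V : Matrix (Fin q) (Fin q) ℝ) (σ : Fin q → ℝ)
    (hU : Uᵀ * U = 1) (hV : Vᵀ * V = 1)
    (hσ_mono : Antitone σ) (hσ_nonneg : ∀ i, 0 ≤ σ i)
    (hSVD : X₁ᵀ * X₂ = U * Matrix.diagonal σ * Vᵀ) :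
    frobSq (X₂ - X₁ * (U * Vᵀ)) = frobSq X₁ + frobSq X₂ - 2 * ∑ i, σ i ∧
    (∀ Γ : Matrix (Fin q) (Fin q) ℝ, Γᵀ * Γ = 1 →
      frobSq X₁ + frobSq X₂ - 2 * ∑ i, σ i ≤ frobSq (X₂ - X₁ * Γ)) := by
  have hU' : U * Uᵀ = 1 := mul_eq_one_comm.mp hU
  have hV' : V * Vᵀ = 1 := mul_eq_one_comm.mp hV
  -- general trace computation
  have key : ∀ Γ : Matrix (Fin q) (Fin q) ℝ,
      (Γᵀ * (X₁ᵀ * X₂)).trace = ∑ i, (Vᵀ * Γᵀ * U) i i * σ i := by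
    intro Γ
    rw [hSVD]
    have : Γᵀ * (U * Matrix.diagonal σ * Vᵀ) =
        (Γᵀ * U * Matrix.diagonal σ) * Vᵀ := by
      simp [Matrix.mul_assoc]
    rw [this, Matrix.trace_mul_comm, ← Matrix.mul_assoc, ← Matrix.mul_assoc,
      trace_form]
  constructor
  · have hΓ0 : (U * Vᵀ)ᵀ * (U * Vᵀ) = 1 := by
      rw [Matrix.transpose_mul, Matrix.transpose_transpose]
      calc V * Uᵀ * (U * Vᵀ) = V * (Uᵀ * U) * Vᵀ := by simp [Matrix.mul_assoc]
        _ = 1 := by rw [hU, Matrix.mul_one, hV']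
    rw [expand_frob _ _ _ hΓ0, key]
    have : Vᵀ * (U * Vᵀ)ᵀ * U = 1 := by
      rw [Matrix.transpose_mul, Matrix.transpose_transpose]
      calc Vᵀ * (V * Uᵀ) * U = Vᵀ * V * (Uᵀ * U) := by simp [Matrix.mul_assoc]
        _ = 1 := by rw [hU, hV, Matrix.mul_one]
    rw [this]
    simp [Matrix.one_apply]
  · intro Γ hΓ
    rw [expand_frob _ _ _ hΓ, key]
    have hZ : (Vᵀ * Γᵀ * U) * (Vᵀ * Γᵀ * U)ᵀ = 1 := by
      rw [Matrix.transpose_mul, Matrix.transpose_mul, Matrix.transpose_transpose,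
        Matrix.transpose_transpose]
      have hΓ' : Γᵀ * Γ = 1 := hΓ
      calc Vᵀ * Γᵀ * U * (Uᵀ * (Γ * V)) = Vᵀ * (Γᵀ * ((U * Uᵀ) * (Γ * V))) := by
            simp [Matrix.mul_assoc]
        _ = 1 := by
            rw [hU', Matrix.one_mul, ← Matrix.mul_assoc Γᵀ Γ V, hΓ', Matrix.one_mul, hV]
    have hle : ∑ i, (Vᵀ * Γᵀ * U) i i * σ i ≤ ∑ i, σ i := by
      apply Finset.sum_le_sum
      intro i _
      have := diag_le_one _ hZ i
      nlinarith [hσ_nonneg i]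
    linarith
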